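/- Let d ≥ 2 and, for −1/(d²−1) ≤ β ≤ 1, let X_iso := β|ψ⁺⟩⟨ψ⁺| + ((1−β)/d²)I_{d²} be the isotropic state on ℂ^d ⊗ ℂ^d, where |ψ⁺⟩ = (1/√d)Σᵢ|ii⟩. Then the eigenvalues of X_iso are (β(d²−1)+1)/d² with multiplicity 1 and (1−β)/d² with multiplicity d²−1, and X_iso ∈ 𝔄𝔉_d if and only if β ≤ 1/(d+1). -/

import Mathlib

open Matrix Kronecker Complex
open scoped ComplexOrder

/-- The canonical maximally entangled vector `|ψ⁺⟩ = (1/√d) ∑ᵢ |ii⟩` on `ℂ^d ⊗ ℂ^d`. -/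
noncomputable def psiPlus (d : ℕ) : (Fin d × Fin d) → ℂ :=
  fun p => if p.1 = p.2 then ((Real.sqrt d)⁻¹ : ℝ) else 0

/-- The fully entangled fraction: the supremum over `d × d` unitaries `V` of
`⟨ψ⁺| (I ⊗ V)† ρ (I ⊗ V) |ψ⁺⟩`. -/
noncomputable def fef (d : ℕ) (ρ : Matrix (Fin d × Fin d) (Fin d × Fin d) ℂ) : ℝ :=
  ⨆ V : Matrix.unitaryGroup (Fin d) ℂ,
    (star (psiPlus d) ⬝ᵥ
      ((((1 : Matrix (Fin d) (Fin d) ℂ) ⊗ₖ (V : Matrix (Fin d) (Fin d) ℂ))ᴴ * ρ *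
        ((1 : Matrix (Fin d) (Fin d) ℂ) ⊗ₖ (V : Matrix (Fin d) (Fin d) ℂ))) *ᵥ psiPlus d)).re

/-- A density matrix: positive semidefinite with unit trace. -/
def IsDensityMatrix {n : Type*} [Fintype n] (ρ : Matrix n n ℂ) : Prop :=
  ρ.PosSemidef ∧ ρ.trace = 1

/-- `ρ` has absolute fully entangled fraction: `F(UρU†) ≤ 1/d` for every unitary `U`. -/
def AbsFEF (d : ℕ) (ρ : Matrix (Fin d × Fin d) (Fin d × Fin d) ℂ) : Prop :=
  ∀ U ∈ Matrix.unitaryGroup (Fin d × Fin d) ℂ, fef d (U * ρ * Uᴴ) ≤ 1 / d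

/-- Basis vector `|ij⟩` of `ℂ^d ⊗ ℂ^d`. -/
def ket (d : ℕ) (i j : Fin d) : (Fin d × Fin d) → ℂ :=
  fun p => if p = (i, j) then 1 else 0

/-- Rank-one projector `|v⟩⟨v|`. -/
def proj {n : Type*} (v : n → ℂ) : Matrix n n ℂ :=
  Matrix.vecMulVec v (star v)

/-- The isotropic state `X_iso = β|ψ⁺⟩⟨ψ⁺| + ((1−β)/d²)I`. -/
noncomputable def isoState (d : ℕ) (β : ℝ) : Matrix (Fin d × Fin d) (Fin d × Fin d) ℂ :=
  (β : ℂ) • proj (psiPlus d) +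
    (((1 - β) / (d : ℝ)^2 : ℝ) : ℂ) • (1 : Matrix (Fin d × Fin d) (Fin d × Fin d) ℂ)

/-! Write `X_iso = β P + c I` with `P = |ψ⁺⟩⟨ψ⁺|` and `c = (1 - β)/d²`. An eigenvector `v` with
eigenvalue `μ` satisfies `(μ - c) v = β ⟨ψ⁺, v⟩ ψ⁺`, so `μ - c ∈ {0, β}`; as the trace gives
`∑ (μ - c) = β`, the value `β + c` occurs exactly once.

Conjugating by `U` and `I ⊗ V` turns each term of the supremum defining `F(U X_iso U†)` into
`β |⟨ψ⁺, M ψ⁺⟩|² + c` with `M = U†(I ⊗ V)` unitary, i.e. into `β s + c` with `s ∈ [0, 1]` by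
Cauchy–Schwarz, and `s = 1` at `U = V = I`. So for `β ≥ 0` the condition is `β + c ≤ 1/d`, which
is `β ≤ 1/(d + 1)`; for `β < 0` all terms are at most `c`, and `c ≤ 1/d` because
`β ≥ -1/(d² - 1) > 1 - d`. -/

section RankOne

variable {n : Type*} [Fintype n]

lemma proj_mulVec (u x : n → ℂ) : proj u *ᵥ x = (star u ⬝ᵥ x) • u := by
  ext i
  simp only [proj, mulVec, dotProduct, vecMulVec_apply, Pi.smul_apply, smul_eq_mul,
    Finset.sum_mul, Pi.star_apply]
  exact Finset.sum_congr rfl fun j _ => by ring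

lemma star_dotProduct_proj_mulVec (u x : n → ℂ) :
    star x ⬝ᵥ (proj u *ᵥ x) = normSq (star u ⬝ᵥ x) := by
  rw [proj_mulVec, dotProduct_smul, smul_eq_mul, star_dotProduct x u, ← mul_conj]
  rfl

lemma trace_proj (u : n → ℂ) : (proj u).trace = star u ⬝ᵥ u := by
  rw [proj, trace_vecMulVec, dotProduct_comm]

lemma normSq_star_dotProduct_le_one {u x : n → ℂ} (hu : star u ⬝ᵥ u = 1)
    (hx : star x ⬝ᵥ x = 1) : normSq (star u ⬝ᵥ x) ≤ 1 := by
  have hinner : ∀ v w : n → ℂ,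
      inner ℂ (WithLp.toLp 2 v : EuclideanSpace ℂ n) (WithLp.toLp 2 w) = star v ⬝ᵥ w :=
    fun v w => dotProduct_comm _ _
  have hnorm : ∀ v : n → ℂ, star v ⬝ᵥ v = 1 → ‖(WithLp.toLp 2 v : EuclideanSpace ℂ n)‖ = 1 :=
    fun v hv => by
      refine (pow_eq_one_iff_of_nonneg (norm_nonneg _) two_ne_zero).mp ?_
      rw [← RCLike.ofReal_inj (K := ℂ), RCLike.ofReal_pow, ← inner_self_eq_norm_sq_to_K, hinner,
        hv, RCLike.ofReal_one]
  have := norm_inner_le_norm (𝕜 := ℂ) (WithLp.toLp 2 u : EuclideanSpace ℂ n) (WithLp.toLp 2 x)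
  rw [hinner, hnorm u hu, hnorm x hx, one_mul] at this
  rw [normSq_eq_norm_sq]
  exact pow_le_one₀ (norm_nonneg _) this

lemma star_mulVec_dotProduct_mulVec_of_mem_unitaryGroup [DecidableEq n] {U : Matrix n n ℂ}
    (hU : U ∈ unitaryGroup n ℂ) (x y : n → ℂ) :
    star (U *ᵥ x) ⬝ᵥ (U *ᵥ y) = star x ⬝ᵥ y := by
  rw [star_mulVec, dotProduct_mulVec, vecMul_vecMul, ← star_eq_conjTranspose, hU.1, vecMul_one]

lemma star_dotProduct_conj_mulVec (M ρ : Matrix n n ℂ) (x : n → ℂ) :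
    star x ⬝ᵥ ((Mᴴ * ρ * M) *ᵥ x) = star (M *ᵥ x) ⬝ᵥ (ρ *ᵥ (M *ᵥ x)) := by
  rw [← mulVec_mulVec, ← mulVec_mulVec, dotProduct_mulVec, star_mulVec, dotProduct_mulVec]

end RankOne

lemma exists_eq_and_forall_ne_eq_zero_of_sum_eq {ι : Type*} [Fintype ι] [Nonempty ι]
    {f : ι → ℝ} {b : ℝ} (hf : ∀ i, f i = 0 ∨ f i = b) (hsum : ∑ i, f i = b) :
    ∃ i₀, f i₀ = b ∧ ∀ i ≠ i₀, f i = 0 := by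
  classical
  rcases eq_or_ne b 0 with rfl | hb
  · obtain ⟨i₀⟩ := ‹Nonempty ι›
    exact ⟨i₀, (hf i₀).elim id id, fun i _ => (hf i).elim id id⟩
  have hf' : ∀ i, f i = if f i = b then b else 0 := fun i => by
    split_ifs with h
    exacts [h, (hf i).resolve_right h]
  have hcard : (Finset.univ.filter fun i => f i = b).card = 1 := by
    rw [Finset.sum_congr rfl fun i _ => hf' i, Finset.sum_ite, Finset.sum_const,
      Finset.sum_const_zero, add_zero, nsmul_eq_mul, mul_eq_right₀ hb] at hsum
    exact_mod_cast hsum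
  obtain ⟨i₀, hi₀⟩ := Finset.card_eq_one.mp hcard
  have hmem : ∀ i, f i = b ↔ i = i₀ := fun i => by
    simpa using Finset.ext_iff.mp hi₀ i
  exact ⟨i₀, (hmem i₀).mpr rfl, fun i hi => (hf i).resolve_right (mt (hmem i).mp hi)⟩

namespace Matrix.IsHermitian

variable {n : Type*} [Fintype n] [DecidableEq n] {u : n → ℂ} {β c : ℝ}

lemma eigenvalues_sub_eq_zero_or_eq (hu : star u ⬝ᵥ u = 1)
    (hA : ((β : ℂ) • proj u + (c : ℂ) • 1 : Matrix n n ℂ).IsHermitian) (i : n) :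
    hA.eigenvalues i - c = 0 ∨ hA.eigenvalues i - c = β := by
  have h := hA.mulVec_eigenvectorBasis i
  set v := ⇑(hA.eigenvectorBasis i)
  have hv : v ≠ 0 := (WithLp.ofLp_eq_zero 2).ne.2 (hA.eigenvectorBasis.orthonormal.ne_zero i)
  have heig : ((hA.eigenvalues i - c : ℝ) : ℂ) • v = (β * (star u ⬝ᵥ v)) • u := by
    rw [add_mulVec, smul_mulVec, smul_mulVec, one_mulVec, proj_mulVec, smul_smul,
      RCLike.real_smul_eq_coe_smul (K := ℂ)] at h
    rw [ofReal_sub, sub_smul]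
    exact sub_eq_iff_eq_add.mpr h.symm
  have hdot : ((hA.eigenvalues i - c - β : ℝ) : ℂ) * (star u ⬝ᵥ v) = 0 := by
    have h' := congrArg (star u ⬝ᵥ ·) heig
    simp only [dotProduct_smul, hu, smul_eq_mul, mul_one] at h'
    push_cast at h' ⊢
    linear_combination h'
  rcases mul_eq_zero.mp hdot with h | ht
  · exact Or.inr (by linarith [ofReal_eq_zero.mp h])
  · rw [ht, mul_zero, zero_smul, smul_eq_zero] at heig
    exact Or.inl (ofReal_eq_zero.mp (heig.resolve_right hv))

lemma sum_eigenvalues_sub (hu : star u ⬝ᵥ u = 1)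
    (hA : ((β : ℂ) • proj u + (c : ℂ) • 1 : Matrix n n ℂ).IsHermitian) :
    ∑ i, (hA.eigenvalues i - c) = β := by
  have h := hA.trace_eq_sum_eigenvalues
  rw [trace_add, trace_smul, trace_smul, trace_one, trace_proj, hu] at h
  have h' := congrArg re h
  simp only [smul_eq_mul, mul_one, add_re, ofReal_re, mul_re, natCast_re, ofReal_im, natCast_im,
    mul_zero, sub_zero, coe_smul, coe_algebraMap, re_sum] at h'
  rw [Finset.sum_sub_distrib, Finset.sum_const, Finset.card_univ, nsmul_eq_mul]
  linarith

lemma eigenvalues_smul_proj_add_smul_one (hu : star u ⬝ᵥ u = 1)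
    (hA : ((β : ℂ) • proj u + (c : ℂ) • 1 : Matrix n n ℂ).IsHermitian) :
    ∃ i₀, hA.eigenvalues i₀ = β + c ∧ ∀ i ≠ i₀, hA.eigenvalues i = c := by
  have : Nonempty n := not_isEmpty_iff.mp fun _ => by simp [dotProduct] at hu
  obtain ⟨i₀, h₀, h⟩ := exists_eq_and_forall_ne_eq_zero_of_sum_eq
    (eigenvalues_sub_eq_zero_or_eq hu hA) (sum_eigenvalues_sub hu hA)
  exact ⟨i₀, by linarith, fun i hi => by linarith [h i hi]⟩

end Matrix.IsHermitian

lemma re_star_dotProduct_conj_smul_proj_add_smul_one_mulVec {n : Type*} [Fintype n]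
    [DecidableEq n] {u : n → ℂ} (hu : star u ⬝ᵥ u = 1) {M : Matrix n n ℂ}
    (hM : M ∈ unitaryGroup n ℂ) (β c : ℝ) :
    (star u ⬝ᵥ ((Mᴴ * ((β : ℂ) • proj u + (c : ℂ) • 1) * M) *ᵥ u)).re =
      β * normSq (star u ⬝ᵥ (M *ᵥ u)) + c := by
  rw [star_dotProduct_conj_mulVec, add_mulVec, dotProduct_add, smul_mulVec, dotProduct_smul,
    star_dotProduct_proj_mulVec, smul_mulVec, one_mulVec, dotProduct_smul,
    star_mulVec_dotProduct_mulVec_of_mem_unitaryGroup hM, hu]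
  simp

lemma star_psiPlus_dotProduct_psiPlus {d : ℕ} (hd : d ≠ 0) :
    star (psiPlus d) ⬝ᵥ psiPlus d = 1 := by
  simp only [dotProduct, psiPlus, Fintype.sum_prod_type, Pi.star_apply, apply_ite star,
    star_zero, ite_mul, zero_mul, mul_ite, mul_zero, Finset.sum_ite_eq, Finset.mem_univ, if_true,
    Finset.sum_const, Finset.card_univ, Fintype.card_fin, nsmul_eq_mul]
  rw [Complex.star_def, conj_ofReal, ← ofReal_mul, ← mul_inv, Real.mul_self_sqrt d.cast_nonneg]
  push_cast
  exact mul_inv_cancel₀ (Nat.cast_ne_zero.mpr hd)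

noncomputable def fefTerm (d : ℕ) (ρ : Matrix (Fin d × Fin d) (Fin d × Fin d) ℂ)
    (V : Matrix (Fin d) (Fin d) ℂ) : ℝ :=
  (star (psiPlus d) ⬝ᵥ ((((1 : Matrix (Fin d) (Fin d) ℂ) ⊗ₖ V)ᴴ * ρ *
    ((1 : Matrix (Fin d) (Fin d) ℂ) ⊗ₖ V)) *ᵥ psiPlus d)).re

lemma fef_eq_iSup_fefTerm (d : ℕ) (ρ : Matrix (Fin d × Fin d) (Fin d × Fin d) ℂ) :
    fef d ρ = ⨆ V : unitaryGroup (Fin d) ℂ, fefTerm d ρ V :=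
  rfl

lemma exists_fefTerm_conj_isoState_eq {d : ℕ} (hd : d ≠ 0) (β : ℝ)
    {U : Matrix (Fin d × Fin d) (Fin d × Fin d) ℂ} (hU : U ∈ unitaryGroup (Fin d × Fin d) ℂ)
    {V : Matrix (Fin d) (Fin d) ℂ} (hV : V ∈ unitaryGroup (Fin d) ℂ) :
    ∃ s, 0 ≤ s ∧ s ≤ 1 ∧
      fefTerm d (U * isoState d β * Uᴴ) V = β * s + (1 - β) / (d : ℝ) ^ 2 := by
  have hψ := star_psiPlus_dotProduct_psiPlus hd
  set M := Uᴴ * ((1 : Matrix (Fin d) (Fin d) ℂ) ⊗ₖ V)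
  have hM : M ∈ unitaryGroup (Fin d × Fin d) ℂ :=
    mul_mem (star_eq_conjTranspose U ▸ Unitary.star_mem hU)
      (kronecker_mem_unitary (one_mem _) hV)
  have hconj : ((1 : Matrix (Fin d) (Fin d) ℂ) ⊗ₖ V)ᴴ * (U * isoState d β * Uᴴ) * (1 ⊗ₖ V) =
      Mᴴ * isoState d β * M := by
    simp only [M, conjTranspose_mul, conjTranspose_conjTranspose, Matrix.mul_assoc]
  refine ⟨normSq (star (psiPlus d) ⬝ᵥ (M *ᵥ psiPlus d)), normSq_nonneg _,
    normSq_star_dotProduct_le_one hψ ?_, ?_⟩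
  · rw [star_mulVec_dotProduct_mulVec_of_mem_unitaryGroup hM, hψ]
  · rw [fefTerm, hconj]
    exact re_star_dotProduct_conj_smul_proj_add_smul_one_mulVec hψ hM _ _

lemma fefTerm_isoState_one {d : ℕ} (hd : d ≠ 0) (β : ℝ) :
    fefTerm d (isoState d β) 1 = β + (1 - β) / (d : ℝ) ^ 2 := by
  have hψ := star_psiPlus_dotProduct_psiPlus hd
  have h := re_star_dotProduct_conj_smul_proj_add_smul_one_mulVec hψ (one_mem _) β
    ((1 - β) / (d : ℝ) ^ 2)
  rw [conjTranspose_one, Matrix.one_mul, Matrix.mul_one, one_mulVec, hψ, map_one, mul_one] at h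
  rw [fefTerm, one_kronecker_one, conjTranspose_one, Matrix.one_mul, Matrix.mul_one]
  exact h

lemma fefTerm_conj_isoState_le {d : ℕ} (hd : d ≠ 0) (β : ℝ)
    {U : Matrix (Fin d × Fin d) (Fin d × Fin d) ℂ} (hU : U ∈ unitaryGroup (Fin d × Fin d) ℂ)
    {b : ℝ} (hb : ∀ s : ℝ, 0 ≤ s → s ≤ 1 → β * s + (1 - β) / (d : ℝ) ^ 2 ≤ b)
    (V : unitaryGroup (Fin d) ℂ) :
    fefTerm d (U * isoState d β * Uᴴ) V ≤ b := by
  obtain ⟨s, hs0, hs1, hs⟩ := exists_fefTerm_conj_isoState_eq hd β hU V.2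
  exact hs ▸ hb s hs0 hs1

lemma fef_conj_isoState_le {d : ℕ} (hd : d ≠ 0) (β : ℝ)
    {U : Matrix (Fin d × Fin d) (Fin d × Fin d) ℂ} (hU : U ∈ unitaryGroup (Fin d × Fin d) ℂ)
    {b : ℝ} (hb : ∀ s : ℝ, 0 ≤ s → s ≤ 1 → β * s + (1 - β) / (d : ℝ) ^ 2 ≤ b) :
    fef d (U * isoState d β * Uᴴ) ≤ b := by
  rw [fef_eq_iSup_fefTerm]
  exact ciSup_le (fefTerm_conj_isoState_le hd β hU hb)

lemma add_le_fef_isoState {d : ℕ} (hd : d ≠ 0) (β : ℝ) :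
    β + (1 - β) / (d : ℝ) ^ 2 ≤ fef d (isoState d β) := by
  have hbdd :
      BddAbove (Set.range fun V : unitaryGroup (Fin d) ℂ => fefTerm d (isoState d β) V) := by
    refine ⟨|β| + (1 - β) / (d : ℝ) ^ 2, Set.forall_mem_range.2 fun V => ?_⟩
    have h := fefTerm_conj_isoState_le hd β (one_mem _) (b := |β| + (1 - β) / (d : ℝ) ^ 2)
      (fun s hs0 hs1 => by nlinarith [le_abs_self β, abs_nonneg β]) V
    rwa [Matrix.one_mul, conjTranspose_one, Matrix.mul_one] at h
  rw [← fefTerm_isoState_one hd β, fef_eq_iSup_fefTerm]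
  exact le_ciSup hbdd 1

lemma add_one_sub_div_sq_le_inv_iff {D β : ℝ} (hD : 1 < D) :
    β + (1 - β) / D ^ 2 ≤ 1 / D ↔ β ≤ 1 / (D + 1) := by
  have hD0 : 0 < D := by linarith
  rw [add_div' _ _ _ (by positivity), div_le_div_iff₀ (by positivity) hD0,
    le_div_iff₀ (by linarith)]
  have hpos : 0 < D * (D - 1) := mul_pos hD0 (by linarith)
  constructor <;> intro h <;> nlinarith

lemma one_sub_div_sq_le_inv {D β : ℝ} (hD : 2 ≤ D) (hβ : -(1 / (D ^ 2 - 1)) ≤ β) :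
    (1 - β) / D ^ 2 ≤ 1 / D := by
  have hinv : 1 / (D ^ 2 - 1) ≤ 1 := by
    rw [div_le_one (by nlinarith)]
    nlinarith
  rw [div_le_div_iff₀ (by positivity) (by linarith)]
  nlinarith

lemma mul_add_one_sub_div_sq_le_inv {D β s : ℝ} (hD : 2 ≤ D) (hβl : -(1 / (D ^ 2 - 1)) ≤ β)
    (hβ : β ≤ 1 / (D + 1)) (hs0 : 0 ≤ s) (hs1 : s ≤ 1) :
    β * s + (1 - β) / D ^ 2 ≤ 1 / D := by
  rcases le_or_gt 0 β with hβ0 | hβ0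
  · have := (add_one_sub_div_sq_le_inv_iff (by linarith)).mpr hβ
    nlinarith
  · have := one_sub_div_sq_le_inv hD hβl
    nlinarith

theorem isoState_absFEF_iff_general (d : ℕ) (hd : 2 ≤ d) (β : ℝ)
    (hβl : -(1 / ((d : ℝ)^2 - 1)) ≤ β)
    (hH : (isoState d β).IsHermitian) :
    (∃ i₀, hH.eigenvalues i₀ = (β * ((d : ℝ)^2 - 1) + 1) / (d : ℝ)^2 ∧
        ∀ i ≠ i₀, hH.eigenvalues i = (1 - β) / (d : ℝ)^2) ∧
      (AbsFEF d (isoState d β) ↔ β ≤ 1 / ((d : ℝ) + 1)) := by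
  have hd0 : d ≠ 0 := by omega
  have hD : (2 : ℝ) ≤ d := by exact_mod_cast hd
  refine ⟨?_, fun h => ?_, fun hβ U hU => ?_⟩
  · obtain ⟨i₀, h₀, h⟩ :=
      hH.eigenvalues_smul_proj_add_smul_one (star_psiPlus_dotProduct_psiPlus hd0)
    refine ⟨i₀, h₀.trans ?_, h⟩
    field_simp
    ring
  · have h1 := h 1 (one_mem _)
    rw [Matrix.one_mul, conjTranspose_one, Matrix.mul_one] at h1
    exact (add_one_sub_div_sq_le_inv_iff (by linarith)).mp ((add_le_fef_isoState hd0 β).trans h1)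
  · exact fef_conj_isoState_le hd0 β hU fun s hs0 hs1 =>
      mul_add_one_sub_div_sq_le_inv hD hβl hβ hs0 hs1

/-- The isotropic state has eigenvalue `(β(d²−1)+1)/d²` with multiplicity one and
`(1−β)/d²` with multiplicity `d²−1`, and belongs to `𝔄𝔉_d` iff `β ≤ 1/(d+1)`. -/
theorem isoState_absFEF_iff (d : ℕ) (hd : 2 ≤ d) (β : ℝ)
    (hβl : -(1 / ((d : ℝ)^2 - 1)) ≤ β) (hβu : β ≤ 1)
    (hH : (isoState d β).IsHermitian) :
    (∃ i₀, hH.eigenvalues i₀ = (β * ((d : ℝ)^2 - 1) + 1) / (d : ℝ)^2 ∧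
        ∀ i ≠ i₀, hH.eigenvalues i = (1 - β) / (d : ℝ)^2) ∧
      (AbsFEF d (isoState d β) ↔ β ≤ 1 / ((d : ℝ) + 1)) :=
  isoState_absFEF_iff_general d hd β hβl hH
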